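/- Farkas separation direction of Gale duality: Let V be a linear subspace of ℝⁿ, let t ∈ ℝⁿ, and let α : Fin n → Bool be a sign vector with associated closed orthant O_α. If the chamber (t + V) ∩ O_α is empty, then there exists y ∈ V^⊥ ∩ O_α with ⟨t, y⟩ < 0. -/

import Mathlib

/-!
Let `K` be the cone generated by `V` and the signed basis vectors `±eᵢ` spanning `O_α`, so that
`K ⊆ V + O_α`. A chamber point `t + v` (`v ∈ V`) exhibits `t = -v + (t + v) ∈ V + O_α`, so an
empty chamber means `t ∉ K`. Being finitely generated, `K` is closed, and Farkas' lemma yields `y`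
with `⟪t, y⟫ < 0 ≤ ⟪k, y⟫` for all `k ∈ K`. Nonnegativity on `±V` forces `y ∈ Vᗮ`, and
nonnegativity on the signed basis vectors forces `y ∈ O_α`.
-/

open scoped RealInnerProductSpace

/-- The closed orthant associated to a sign vector `α : Fin n → Bool`. -/
def orthant {n : ℕ} (α : Fin n → Bool) : Set (EuclideanSpace ℝ (Fin n)) :=
  {x | ∀ i, (α i = true → 0 ≤ x i) ∧ (α i = false → x i ≤ 0)}

/-- The chamber `(t + V) ∩ O_α` of the coordinate hyperplane arrangement restricted to
the affine subspace `t + V`. -/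
def chamber {n : ℕ} (V : Submodule ℝ (EuclideanSpace ℝ (Fin n)))
    (t : EuclideanSpace ℝ (Fin n)) (α : Fin n → Bool) : Set (EuclideanSpace ℝ (Fin n)) :=
  ((fun v => t + v) '' (V : Set (EuclideanSpace ℝ (Fin n)))) ∩ orthant α

open Set

lemma Finset.exists_nonneg_sub_mul_eq_zero {ι : Type*} {s : Finset ι} {c g : ι → ℝ}
    (hc : ∀ i ∈ s, 0 ≤ c i) (hg : ∃ i ∈ s, 0 < g i) :
    ∃ r : ℝ, (∀ i ∈ s, 0 ≤ c i - r * g i) ∧ ∃ i ∈ s, c i - r * g i = 0 := by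
  classical
  set T := s.filter (fun i => 0 < g i)
  have hT : T.Nonempty := by simpa [T, Finset.filter_nonempty_iff] using hg
  obtain ⟨i₀, hi₀, hr⟩ := Finset.exists_mem_eq_inf' hT (fun i => c i / g i)
  obtain ⟨hi₀s, hgi₀⟩ := Finset.mem_filter.1 hi₀
  set r := T.inf' hT (fun i => c i / g i)
  refine ⟨r, fun i hi => ?_, i₀, hi₀s, by rw [hr, div_mul_cancel₀ _ hgi₀.ne', sub_self]⟩
  rcases lt_or_ge 0 (g i) with hgi | hgi
  · have : r ≤ c i / g i := Finset.inf'_le _ (Finset.mem_filter.2 ⟨hi, hgi⟩)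
    rw [le_div_iff₀ hgi] at this
    linarith
  · have : 0 ≤ r := hr ▸ div_nonneg (hc i₀ hi₀s) hgi₀.le
    nlinarith [hc i hi]

namespace PointedCone

variable {E : Type*} [AddCommGroup E] [Module ℝ E]

lemma mem_hull_finset_iff {s : Finset E} {x : E} :
    x ∈ hull ℝ (s : Set E) ↔ ∃ c : E → ℝ, (∀ y ∈ s, 0 ≤ c y) ∧ ∑ y ∈ s, c y • y = x := by
  constructor
  · intro hx
    obtain ⟨f, -, rfl⟩ := Submodule.mem_span_finset.1 hx
    exact ⟨fun y => f y, fun y _ => (f y).2, rfl⟩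
  · rintro ⟨c, hc, rfl⟩
    exact Submodule.sum_mem _ fun y hy => smul_mem _ (hc y hy) (subset_hull hy)

lemma hull_union_neg (s : Set E) : hull ℝ (s ∪ -s) = Submodule.span ℝ s := by
  refine le_antisymm (Submodule.span_le.2 <| union_subset Submodule.subset_span fun x hx =>
    by simpa using Submodule.neg_mem _ (Submodule.subset_span hx : -x ∈ Submodule.span ℝ s)) ?_
  intro x hx
  suffices x ∈ hull ℝ (s ∪ -s) ∧ -x ∈ hull ℝ (s ∪ -s) from this.1
  induction hx using Submodule.span_induction with
  | mem x hx => exact ⟨subset_hull (.inl hx), subset_hull (.inr (by simpa using hx))⟩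
  | zero => simp
  | add x y _ _ hx hy => exact ⟨add_mem hx.1 hy.1, by rw [neg_add]; exact add_mem hx.2 hy.2⟩
  | smul r x _ hx =>
    rcases le_total 0 r with hr | hr
    · exact ⟨smul_mem _ hr hx.1, by simpa using smul_mem _ hr hx.2⟩
    · exact ⟨by simpa using smul_mem _ (neg_nonneg.2 hr) hx.2,
        by simpa using smul_mem _ (neg_nonneg.2 hr) hx.1⟩

lemma fg_ofSubmodule {S : Submodule ℝ E} (hS : S.FG) : (S : PointedCone ℝ E).FG := by
  obtain ⟨s, rfl⟩ := hS
  rw [← hull_union_neg]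
  exact Submodule.fg_span (s.finite_toSet.union s.finite_toSet.neg)

-- Push the combination along a relation with a positive coefficient until a coefficient vanishes.
lemma coe_hull_eq_iUnion_hull_erase [DecidableEq E] {s : Finset E}
    (hs : ¬LinearIndepOn ℝ id (s : Set E)) :
    (hull ℝ (s : Set E) : Set E) = ⋃ y ∈ s, (hull ℝ ((s.erase y : Finset E) : Set E) : Set E) := by
  refine Subset.antisymm (fun x hx => ?_) <| iUnion₂_subset fun y _ =>
    Submodule.span_mono (Finset.coe_subset.2 (s.erase_subset y))
  obtain ⟨g, hg, hg₀⟩ : ∃ g : E → ℝ, ∑ y ∈ s, g y • y = 0 ∧ ∃ y ∈ s, 0 < g y := by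
    obtain ⟨g, hg, y, hy, hgy⟩ := not_linearIndepOn_finset_iff.1 hs
    rcases hgy.lt_or_gt with hneg | hpos
    · exact ⟨-g, by simpa [neg_smul] using hg, y, hy, by simpa using hneg⟩
    · exact ⟨g, hg, y, hy, hpos⟩
  obtain ⟨c, hc, rfl⟩ := mem_hull_finset_iff.1 hx
  obtain ⟨r, hr, y, hy, hry⟩ := Finset.exists_nonneg_sub_mul_eq_zero hc hg₀
  have hsum : ∑ z ∈ s, c z • z = ∑ z ∈ s, (c z - r * g z) • z := by
    simp only [sub_smul, mul_smul, Finset.sum_sub_distrib, ← Finset.smul_sum, hg, smul_zero,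
      sub_zero]
  refine mem_iUnion₂.2 ⟨y, hy, mem_hull_finset_iff.2 ⟨fun z => c z - r * g z,
    fun z hz => hr z (Finset.mem_of_mem_erase hz), ?_⟩⟩
  rw [hsum, ← Finset.sum_erase_add _ _ hy, hry, zero_smul, add_zero]

variable [TopologicalSpace E] [IsTopologicalAddGroup E] [ContinuousSMul ℝ E] [T2Space E]

lemma isClosed_hull_range_of_linearIndependent {ι : Type*} [Fintype ι] {v : ι → E}
    (hv : LinearIndependent ℝ v) : IsClosed (hull ℝ (range v) : Set E) := by
  have hhull : (hull ℝ (range v) : Set E) =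
      Fintype.linearCombination ℝ v '' pi univ fun _ => Ici 0 := by
    ext x
    simp only [SetLike.mem_coe, Submodule.mem_span_range_iff_exists_fun, mem_image, mem_pi,
      mem_univ, mem_Ici, forall_const, Fintype.linearCombination_apply]
    constructor
    · rintro ⟨c, rfl⟩
      exact ⟨fun i => c i, fun i => (c i).2, rfl⟩
    · rintro ⟨c, hc, rfl⟩
      exact ⟨fun i => ⟨c i, hc i⟩, rfl⟩
  rw [hhull]
  refine (LinearMap.isClosedEmbedding_of_injective ?_).isClosedMap _
    (isClosed_set_pi fun _ _ => isClosed_Ici)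
  exact LinearMap.ker_eq_bot.2 hv.fintypeLinearCombination_injective

lemma isClosed_of_fg {C : PointedCone ℝ E} (hC : C.FG) : IsClosed (C : Set E) := by
  classical
  obtain ⟨s, rfl⟩ := hC
  induction s using Finset.strongInduction with
  | H s ih =>
    by_cases hs : LinearIndepOn ℝ id (s : Set E)
    · simpa using isClosed_hull_range_of_linearIndependent hs
    · rw [coe_hull_eq_iUnion_hull_erase hs]
      exact isClosed_biUnion_finset fun y hy => ih _ (Finset.erase_ssubset hy)

end PointedCone

section Orthant

variable {n : ℕ} (α : Fin n → Bool)

def orthantSign (i : Fin n) : ℝ := if α i then 1 else -1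

variable {α}

lemma mem_orthant_iff {x : EuclideanSpace ℝ (Fin n)} :
    x ∈ orthant α ↔ ∀ i, 0 ≤ orthantSign α i * x i := by
  refine forall_congr' fun i => ?_
  cases h : α i <;> simp [orthantSign, h]

variable (α)

def orthantCone : PointedCone ℝ (EuclideanSpace ℝ (Fin n)) where
  carrier := orthant α
  zero_mem' := mem_orthant_iff.2 fun i => by simp
  add_mem' {x y} hx hy := mem_orthant_iff.2 fun i => by
    simpa [mul_add] using add_nonneg (mem_orthant_iff.1 hx i) (mem_orthant_iff.1 hy i)
  smul_mem' c x hx := mem_orthant_iff.2 fun i => by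
    change 0 ≤ orthantSign α i * ((c : ℝ) * x i)
    simpa only [mul_left_comm] using mul_nonneg c.2 (mem_orthant_iff.1 hx i)

noncomputable def signedBasisVector (i : Fin n) : EuclideanSpace ℝ (Fin n) :=
  EuclideanSpace.single i (orthantSign α i)

lemma signedBasisVector_mem_orthant (i : Fin n) : signedBasisVector α i ∈ orthant α :=
  mem_orthant_iff.2 fun j => by
    rcases eq_or_ne j i with rfl | hji
    · cases h : α j <;> simp [signedBasisVector, orthantSign, h]
    · simp [signedBasisVector, hji]

lemma inner_signedBasisVector (i : Fin n) (y : EuclideanSpace ℝ (Fin n)) :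
    ⟪signedBasisVector α i, y⟫ = orthantSign α i * y i := by
  simp [signedBasisVector, EuclideanSpace.inner_single_left]

lemma hull_range_signedBasisVector_le :
    PointedCone.hull ℝ (range (signedBasisVector α)) ≤ orthantCone α :=
  Submodule.span_le.2 <| range_subset_iff.2 (signedBasisVector_mem_orthant α)

end Orthant

lemma notMem_sup_orthantCone_of_chamber_eq_empty {n : ℕ}
    {V : Submodule ℝ (EuclideanSpace ℝ (Fin n))} {t : EuclideanSpace ℝ (Fin n)}
    {α : Fin n → Bool} (h : chamber V t α = ∅) : t ∉ (V : PointedCone ℝ _) ⊔ orthantCone α := by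
  intro ht
  obtain ⟨v, hv, o, ho, rfl⟩ := Submodule.mem_sup.1 ht
  have : o ∈ chamber V (v + o) α := ⟨⟨-v, V.neg_mem hv, add_neg_cancel_comm v o⟩, ho⟩
  simp [h] at this

/-- Farkas separation direction of Gale duality: if the chamber `(t + V) ∩ O_α` is empty,
then there exists `y ∈ V^⊥ ∩ O_α` with `⟨t, y⟩ < 0`. -/
theorem gale_duality_farkas_separation {n : ℕ}
    (V : Submodule ℝ (EuclideanSpace ℝ (Fin n)))
    (t : EuclideanSpace ℝ (Fin n)) (α : Fin n → Bool)
    (h : chamber V t α = ∅) :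
    ∃ y ∈ (Vᗮ : Set (EuclideanSpace ℝ (Fin n))) ∩ orthant α, ⟪t, y⟫ < 0 := by
  set K := (V : PointedCone ℝ (EuclideanSpace ℝ (Fin n))) ⊔
    PointedCone.hull ℝ (range (signedBasisVector α))
  have hK : K.FG := (PointedCone.fg_ofSubmodule (IsNoetherian.noetherian V)).sup
    (Submodule.fg_span (finite_range _))
  have htK : t ∉ K := fun ht => notMem_sup_orthantCone_of_chamber_eq_empty h <|
    sup_le_sup_left (hull_range_signedBasisVector_le α) _ ht
  obtain ⟨y, hyK, hty⟩ :=
    ProperCone.hyperplane_separation' ⟨K, PointedCone.isClosed_of_fg hK⟩ htK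
  refine ⟨y, ⟨(Submodule.mem_orthogonal _ _).2 fun u hu => ?_,
    mem_orthant_iff.2 fun i => ?_⟩, hty⟩
  · exact le_antisymm (by simpa using hyK (-u) (Submodule.mem_sup_left (V.neg_mem hu)))
      (hyK u (Submodule.mem_sup_left hu))
  · rw [← inner_signedBasisVector]
    exact hyK _ (Submodule.mem_sup_right (PointedCone.subset_hull (mem_range_self i)))
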